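/- Let k ≥ 1, n ≥ 1 be integers and for t ∈ ℝ let a_j(t) be the Fourier coefficients of e^{t/z}(1+z)^k. For every real t at which D_n(t) := det T_n(t) ≠ 0, one has n·t − (k+n)·Ũ⁺_n(t) + t·U⁺_n(t) = 0, where U⁺_n(t) is the first component of T_n(t)^{−1} a⁺(t) and Ũ⁺_n(t) is the first component of (T_n(t)ᵀ)^{−1} ã⁺(t). -/
import Mathlib

open scoped BigOperators
open Matrix

/-- The Fourier coefficients `a_j(t)` of the symbol `e^{t/z} (1+z)^k`. -/
noncomputable def aCoeff (k : ℕ) (j : ℤ) (t : ℝ) : ℝ :=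
  ∑' ℓ : ℕ, t ^ ℓ / (Nat.factorial ℓ : ℝ) *
    (if 0 ≤ j + (ℓ : ℤ) then (Nat.choose k (j + (ℓ : ℤ)).toNat : ℝ) else 0)

/-- The `n × n` Toeplitz matrix `T_n(t)` with `(i,j)` entry `a_{i-j}(t)`. -/
noncomputable def Tn (k n : ℕ) (t : ℝ) : Matrix (Fin n) (Fin n) ℝ :=
  Matrix.of fun i j : Fin n => aCoeff k (((i : ℕ) : ℤ) - ((j : ℕ) : ℤ)) t

/-- The vector `a⁺(t) = (a_1(t), …, a_n(t))`. -/
noncomputable def aplus (k n : ℕ) (t : ℝ) : Fin n → ℝ :=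
  fun i => aCoeff k (((i : ℕ) : ℤ) + 1) t

/-- The vector `ã⁺(t) = (a_{-1}(t), …, a_{-n}(t))`. -/
noncomputable def atplus (k n : ℕ) (t : ℝ) : Fin n → ℝ :=
  fun i => aCoeff k (-(((i : ℕ) : ℤ) + 1)) t

/-! ### Auxiliary lemmas -/

noncomputable def chi (k : ℕ) (s : ℤ) : ℝ :=
  if 0 ≤ s then (Nat.choose k s.toNat : ℝ) else 0

lemma chi_rec (k : ℕ) (s : ℤ) :
    (s : ℝ) * chi k s + ((s : ℝ) - 1 - (k : ℝ)) * chi k (s - 1) = 0 := by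
  unfold chi
  rcases lt_trichotomy s 0 with h | h | h
  · rw [if_neg (by omega), if_neg (by omega)]; ring
  · subst h; norm_num
  · rw [if_pos (by omega), if_pos (by omega)]
    obtain ⟨v, hv⟩ : ∃ v : ℕ, s = (v : ℤ) + 1 := ⟨(s - 1).toNat, by omega⟩
    subst hv
    have h1 : ((v : ℤ) + 1).toNat = v + 1 := by omega
    have h2 : ((v : ℤ) + 1 - 1).toNat = v := by omega
    rw [h1, h2]
    rcases le_or_gt v k with hvk | hvk
    · have := Nat.choose_succ_right_eq k v
      have hc : (k.choose (v+1) : ℝ) * (v+1) = (k.choose v : ℝ) * ((k : ℝ) - v) := by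
        have h3 : ((k.choose (v+1) * (v+1) : ℕ) : ℝ) = ((k.choose v * (k - v) : ℕ) : ℝ) := by
          rw [this]
        push_cast [Nat.cast_sub hvk] at h3
        linarith [h3]
      push_cast
      nlinarith [hc]
    · rw [Nat.choose_eq_zero_of_lt (by omega), Nat.choose_eq_zero_of_lt hvk]
      ring

lemma aCoeff_eq_chi_sum (k : ℕ) (j : ℤ) (t : ℝ) :
    aCoeff k j t = ∑' ℓ : ℕ, t ^ ℓ / (Nat.factorial ℓ : ℝ) * chi k (j + ℓ) := rfl

lemma aCoeff_eq_sum (k : ℕ) (j : ℤ) (t : ℝ) (N : ℕ) (hN : (k : ℤ) < j + N) :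
    aCoeff k j t = ∑ ℓ ∈ Finset.range N, t ^ ℓ / (Nat.factorial ℓ : ℝ) * chi k (j + ℓ) := by
  rw [aCoeff_eq_chi_sum]
  apply tsum_eq_sum
  intro ℓ hℓ
  rw [Finset.mem_range, not_lt] at hℓ
  have : chi k (j + ℓ) = 0 := by
    unfold chi
    split_ifs with h
    · rw [Nat.choose_eq_zero_of_lt (by omega)]; norm_num
    · rfl
  rw [this, mul_zero]

lemma shift_sum (k : ℕ) (j : ℤ) (t : ℝ) (N : ℕ) :
    t * ∑ ℓ ∈ Finset.range N, t ^ ℓ / (Nat.factorial ℓ : ℝ) * chi k (j + 1 + ℓ)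
      = ∑ ℓ ∈ Finset.range (N + 1), (ℓ : ℝ) * (t ^ ℓ / (Nat.factorial ℓ : ℝ)) * chi k (j + ℓ) := by
  rw [Finset.sum_range_succ']
  simp only [Nat.cast_zero, zero_mul]
  rw [add_zero, Finset.mul_sum]
  apply Finset.sum_congr rfl
  intro ℓ _
  have hfac : ((Nat.factorial (ℓ+1) : ℝ)) = (ℓ + 1) * (Nat.factorial ℓ : ℝ) := by
    rw [Nat.factorial_succ]; push_cast; ring
  have h1 : (j + 1 + (ℓ : ℤ)) = j + ((ℓ : ℕ) + 1 : ℕ) := by push_cast; ring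
  rw [h1, hfac]
  have hf : (Nat.factorial ℓ : ℝ) ≠ 0 := Nat.cast_ne_zero.2 (Nat.factorial_ne_zero ℓ)
  have hl1 : ((ℓ:ℝ) + 1) ≠ 0 := by positivity
  push_cast
  field_simp
  ring

lemma aCoeff_rec (k : ℕ) (t : ℝ) (m : ℤ) :
    t * aCoeff k (m + 1) t + ((m : ℝ) + t) * aCoeff k m t
      + ((m : ℝ) - 1 - (k : ℝ)) * aCoeff k (m - 1) t = 0 := by
  set N : ℕ := k + 2 + m.natAbs with hNdef
  have hmn : 0 ≤ m + m.natAbs := by omega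
  have h1 : aCoeff k (m + 1) t
      = ∑ ℓ ∈ Finset.range N, t ^ ℓ / (Nat.factorial ℓ : ℝ) * chi k (m + 1 + ℓ) :=
    aCoeff_eq_sum k (m+1) t N (by omega)
  have h2 : aCoeff k m t
      = ∑ ℓ ∈ Finset.range N, t ^ ℓ / (Nat.factorial ℓ : ℝ) * chi k ((m - 1) + 1 + ℓ) := by
    rw [aCoeff_eq_sum k m t N (by omega)]
    apply Finset.sum_congr rfl; intro ℓ _; congr 2; ring
  have h2' : aCoeff k m t
      = ∑ ℓ ∈ Finset.range (N+1), t ^ ℓ / (Nat.factorial ℓ : ℝ) * chi k (m + ℓ) :=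
    aCoeff_eq_sum k m t (N+1) (by omega)
  have h3 : aCoeff k (m - 1) t
      = ∑ ℓ ∈ Finset.range (N+1), t ^ ℓ / (Nat.factorial ℓ : ℝ) * chi k (m - 1 + ℓ) :=
    aCoeff_eq_sum k (m-1) t (N+1) (by omega)
  have e1 : t * aCoeff k (m+1) t
      = ∑ ℓ ∈ Finset.range (N+1), (ℓ : ℝ) * (t ^ ℓ / (Nat.factorial ℓ : ℝ)) * chi k (m + ℓ) := by
    rw [h1]; exact shift_sum k m t N
  have e2 : t * aCoeff k m t
      = ∑ ℓ ∈ Finset.range (N+1), (ℓ : ℝ) * (t ^ ℓ / (Nat.factorial ℓ : ℝ)) * chi k (m - 1 + ℓ) := by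
    rw [h2]; exact shift_sum k (m-1) t N
  calc t * aCoeff k (m + 1) t + ((m : ℝ) + t) * aCoeff k m t
      + ((m : ℝ) - 1 - (k : ℝ)) * aCoeff k (m - 1) t
      = (t * aCoeff k (m+1) t) + (m : ℝ) * aCoeff k m t
        + ((t * aCoeff k m t) + ((m : ℝ) - 1 - (k : ℝ)) * aCoeff k (m-1) t) := by ring
    _ = ∑ ℓ ∈ Finset.range (N+1), t ^ ℓ / (Nat.factorial ℓ : ℝ) *
          (((ℓ : ℝ) + m) * chi k (m + ℓ) + ((ℓ : ℝ) + m - 1 - k) * chi k (m - 1 + ℓ)) := by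
        rw [e1, e2, h2', h3, Finset.mul_sum, Finset.mul_sum,
          ← Finset.sum_add_distrib, ← Finset.sum_add_distrib, ← Finset.sum_add_distrib]
        apply Finset.sum_congr rfl
        intro ℓ _
        ring
    _ = 0 := by
        apply Finset.sum_eq_zero
        intro ℓ _
        have := chi_rec k (m + ℓ)
        have he : m + (ℓ:ℤ) - 1 = m - 1 + ℓ := by ring
        rw [he] at this
        push_cast at this
        rw [show ((ℓ:ℝ) + ↑m) * chi k (m+↑ℓ) + ((ℓ:ℝ) + ↑m - 1 - ↑k) * chi k (m-1+↑ℓ) = 0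
          from by linarith, mul_zero]

noncomputable def Jmat (n : ℕ) : Matrix (Fin n) (Fin n) ℝ :=
  Matrix.of fun p q : Fin n => if q = p.rev then (1:ℝ) else 0

lemma Jmat_mul (n : ℕ) (M : Matrix (Fin n) (Fin n) ℝ) (p q : Fin n) :
    (Jmat n * M) p q = M p.rev q := by
  simp [Jmat, Matrix.mul_apply]

lemma mul_Jmat (n : ℕ) (M : Matrix (Fin n) (Fin n) ℝ) (p q : Fin n) :
    (M * Jmat n) p q = M p q.rev := by
  simp only [Jmat, Matrix.mul_apply, Matrix.of_apply]
  rw [Finset.sum_eq_single q.rev]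
  · simp
  · intro r _ hr
    rw [if_neg, mul_zero]
    intro h; exact hr (by rw [h, Fin.rev_rev])
  · simp

lemma Jmat_mul_Jmat (n : ℕ) : Jmat n * Jmat n = 1 := by
  ext p q
  rw [mul_Jmat]
  simp [Jmat, Matrix.one_apply, eq_comm, Fin.rev_eq_iff]

lemma Tn_persymm (k n : ℕ) (t : ℝ) : Jmat n * Tn k n t * Jmat n = (Tn k n t)ᵀ := by
  ext p q
  rw [mul_Jmat, Jmat_mul]
  show aCoeff k ((p.rev : ℕ) - ((q.rev : ℕ) : ℤ)) t = aCoeff k ((q : ℕ) - ((p : ℕ) : ℤ)) t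
  congr 1
  have hp := p.isLt; have hq := q.isLt
  rw [Fin.val_rev, Fin.val_rev]
  omega

lemma inv_persymm (k n : ℕ) (t : ℝ) :
    ((Tn k n t)⁻¹)ᵀ = Jmat n * (Tn k n t)⁻¹ * Jmat n := by
  have hJ : (Jmat n)⁻¹ = Jmat n := Matrix.inv_eq_right_inv (Jmat_mul_Jmat n)
  rw [Matrix.transpose_nonsing_inv, ← Tn_persymm, Matrix.mul_inv_rev, Matrix.mul_inv_rev, hJ]
  rw [Matrix.mul_assoc]

lemma aCoeff_congr (k : ℕ) (t : ℝ) {x y : ℤ} (h : x = y) : aCoeff k x t = aCoeff k y t := by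
  rw [h]

/-- Identity (3.18) of Tracy–Widom. -/
theorem summed_recursion_identity (k n : ℕ) (hk : 1 ≤ k) (hn : 1 ≤ n) (t : ℝ)
    (ht : Matrix.det (Tn k n t) ≠ 0) :
    (n : ℝ) * t -
        ((k : ℝ) + n) * (((Tn k n t)ᵀ)⁻¹ *ᵥ atplus k n t) ⟨0, by omega⟩ +
        t * ((Tn k n t)⁻¹ *ᵥ aplus k n t) ⟨0, by omega⟩ = 0 := by
  obtain ⟨m, rfl⟩ : ∃ m, n = m + 1 := ⟨n - 1, by omega⟩
  set B := (Tn k (m+1) t)⁻¹ with hBdef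
  have hu : IsUnit (Tn k (m+1) t).det := isUnit_iff_ne_zero.mpr ht
  have hBT : B * Tn k (m+1) t = 1 := Matrix.nonsing_inv_mul _ hu
  have hTB : Tn k (m+1) t * B = 1 := Matrix.mul_nonsing_inv _ hu
  have hBTe : ∀ p q : Fin (m+1),
      (∑ i : Fin (m+1), B p i * aCoeff k (((i:ℕ):ℤ) - ((q:ℕ):ℤ)) t) = if p = q then (1:ℝ) else 0 := by
    intro p q
    have h : (B * Tn k (m+1) t) p q = (1 : Matrix (Fin (m+1)) (Fin (m+1)) ℝ) p q := by rw [hBT]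
    rwa [Matrix.mul_apply, Matrix.one_apply] at h
  have hTBe : ∀ p q : Fin (m+1),
      (∑ i : Fin (m+1), aCoeff k (((p:ℕ):ℤ) - ((i:ℕ):ℤ)) t * B i q) = if p = q then (1:ℝ) else 0 := by
    intro p q
    have h : (Tn k (m+1) t * B) p q = (1 : Matrix (Fin (m+1)) (Fin (m+1)) ℝ) p q := by rw [hTB]
    rwa [Matrix.mul_apply, Matrix.one_apply] at h
  set U := ∑ i : Fin (m+1), B 0 i * aCoeff k (((i:ℕ):ℤ) + 1) t with hUdef
  set W := ∑ i : Fin (m+1), B (Fin.last m) i * aCoeff k (((i:ℕ):ℤ) - (m:ℤ) - 1) t with hWdef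
  -- S1
  have hS1 : (∑ i : Fin (m+1), ∑ j : Fin (m+1),
      B j i * aCoeff k (((i:ℕ):ℤ) - ((j:ℕ):ℤ) + 1) t) = U := by
    rw [Finset.sum_comm, Fin.sum_univ_succ]
    have h0 : (∑ i : Fin (m+1),
        B 0 i * aCoeff k (((i:ℕ):ℤ) - (((0:Fin (m+1)):ℕ):ℤ) + 1) t) = U := by
      rw [hUdef]
      refine Finset.sum_congr rfl fun i _ => ?_
      rw [aCoeff_congr k t (show ((i:ℕ):ℤ) - (((0:Fin (m+1)):ℕ):ℤ) + 1 = ((i:ℕ):ℤ) + 1 by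
        simp)]
    have hsucc : ∀ j' : Fin m, (∑ i : Fin (m+1),
        B j'.succ i * aCoeff k (((i:ℕ):ℤ) - ((j'.succ:ℕ):ℤ) + 1) t) = 0 := by
      intro j'
      have h := hBTe j'.succ j'.castSucc
      rw [if_neg (by simp [Fin.ext_iff])] at h
      rw [← h]
      refine Finset.sum_congr rfl fun i _ => ?_
      rw [aCoeff_congr k t (show ((i:ℕ):ℤ) - ((j'.succ:ℕ):ℤ) + 1
        = ((i:ℕ):ℤ) - ((j'.castSucc:ℕ):ℤ) by
        push_cast [Fin.val_succ, Fin.coe_castSucc]; ring)]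
    simp only [hsucc, Finset.sum_const_zero, add_zero, h0]
  -- S2
  have hS2 : (∑ i : Fin (m+1), ∑ j : Fin (m+1),
      (((i:ℕ):ℝ) - ((j:ℕ):ℝ)) * (B j i * aCoeff k (((i:ℕ):ℤ) - ((j:ℕ):ℤ)) t)) = 0 := by
    have hsplit : ∀ i j : Fin (m+1),
        (((i:ℕ):ℝ) - ((j:ℕ):ℝ)) * (B j i * aCoeff k (((i:ℕ):ℤ) - ((j:ℕ):ℤ)) t)
        = ((i:ℕ):ℝ) * (aCoeff k (((i:ℕ):ℤ) - ((j:ℕ):ℤ)) t * B j i)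
          - ((j:ℕ):ℝ) * (B j i * aCoeff k (((i:ℕ):ℤ) - ((j:ℕ):ℤ)) t) := by
      intro i j; ring
    simp only [hsplit, Finset.sum_sub_distrib]
    have hA : (∑ i : Fin (m+1), ∑ j : Fin (m+1),
        ((i:ℕ):ℝ) * (aCoeff k (((i:ℕ):ℤ) - ((j:ℕ):ℤ)) t * B j i))
        = ∑ i : Fin (m+1), ((i:ℕ):ℝ) := by
      refine Finset.sum_congr rfl fun i _ => ?_
      rw [← Finset.mul_sum]
      have h := hTBe i i; rw [if_pos rfl] at h
      rw [h, mul_one]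
    have hB2 : (∑ i : Fin (m+1), ∑ j : Fin (m+1),
        ((j:ℕ):ℝ) * (B j i * aCoeff k (((i:ℕ):ℤ) - ((j:ℕ):ℤ)) t))
        = ∑ j : Fin (m+1), ((j:ℕ):ℝ) := by
      rw [Finset.sum_comm]
      refine Finset.sum_congr rfl fun j _ => ?_
      rw [← Finset.mul_sum]
      have h := hBTe j j; rw [if_pos rfl] at h
      rw [h, mul_one]
    rw [hA, hB2, sub_self]
  -- S3
  have hS3 : (∑ i : Fin (m+1), ∑ j : Fin (m+1),
      B j i * aCoeff k (((i:ℕ):ℤ) - ((j:ℕ):ℤ)) t) = ((m:ℝ) + 1) := by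
    rw [Finset.sum_comm]
    have h1 : ∀ j : Fin (m+1),
        (∑ i : Fin (m+1), B j i * aCoeff k (((i:ℕ):ℤ) - ((j:ℕ):ℤ)) t) = 1 := by
      intro j; have h := hBTe j j; rw [if_pos rfl] at h; exact h
    simp only [h1, Finset.sum_const, Finset.card_univ, Fintype.card_fin, nsmul_eq_mul, mul_one]
    push_cast; ring
  -- S4
  have hS4 : (∑ i : Fin (m+1),
      ((i:ℕ):ℝ) * ∑ j : Fin (m+1), aCoeff k (((i:ℕ):ℤ) - ((j:ℕ):ℤ) - 1) t * B j i) = 0 := by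
    rw [Fin.sum_univ_succ]
    have h0 : ((((0:Fin (m+1)):ℕ):ℝ) *
        ∑ j : Fin (m+1), aCoeff k ((((0:Fin (m+1)):ℕ):ℤ) - ((j:ℕ):ℤ) - 1) t * B j 0) = 0 := by
      simp
    have hsucc : ∀ i' : Fin m, (((i'.succ:ℕ):ℝ) *
        ∑ j : Fin (m+1), aCoeff k (((i'.succ:ℕ):ℤ) - ((j:ℕ):ℤ) - 1) t * B j i'.succ) = 0 := by
      intro i'
      have h := hTBe i'.castSucc i'.succ
      rw [if_neg (by simp [Fin.ext_iff])] at h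
      rw [show (∑ j : Fin (m+1),
          aCoeff k (((i'.succ:ℕ):ℤ) - ((j:ℕ):ℤ) - 1) t * B j i'.succ)
          = ∑ j : Fin (m+1), aCoeff k (((i'.castSucc:ℕ):ℤ) - ((j:ℕ):ℤ)) t * B j i'.succ from
        Finset.sum_congr rfl fun j _ => by
          rw [aCoeff_congr k t (show ((i'.succ:ℕ):ℤ) - ((j:ℕ):ℤ) - 1
            = ((i'.castSucc:ℕ):ℤ) - ((j:ℕ):ℤ) by
            push_cast [Fin.val_succ, Fin.coe_castSucc]; ring)], h, mul_zero]
    simp only [hsucc, Finset.sum_const_zero, add_zero, h0]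
  -- S5
  have hS5 : (∑ i : Fin (m+1), ∑ j : Fin (m+1),
      (((j:ℕ):ℝ) + 1 + (k:ℝ)) * (B j i * aCoeff k (((i:ℕ):ℤ) - ((j:ℕ):ℤ) - 1) t))
      = ((m:ℝ) + 1 + k) * W := by
    rw [Finset.sum_comm, Fin.sum_univ_castSucc]
    have hcs : ∀ j' : Fin m, (∑ i : Fin (m+1),
        (((j'.castSucc:ℕ):ℝ) + 1 + (k:ℝ)) *
          (B j'.castSucc i * aCoeff k (((i:ℕ):ℤ) - ((j'.castSucc:ℕ):ℤ) - 1) t)) = 0 := by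
      intro j'
      rw [← Finset.mul_sum]
      have h := hBTe j'.castSucc j'.succ
      rw [if_neg (by simp [Fin.ext_iff])] at h
      rw [show (∑ i : Fin (m+1),
          B j'.castSucc i * aCoeff k (((i:ℕ):ℤ) - ((j'.castSucc:ℕ):ℤ) - 1) t)
          = ∑ i : Fin (m+1), B j'.castSucc i * aCoeff k (((i:ℕ):ℤ) - ((j'.succ:ℕ):ℤ)) t from
        Finset.sum_congr rfl fun i _ => by
          rw [aCoeff_congr k t (show ((i:ℕ):ℤ) - ((j'.castSucc:ℕ):ℤ) - 1
            = ((i:ℕ):ℤ) - ((j'.succ:ℕ):ℤ) by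
            push_cast [Fin.val_succ, Fin.coe_castSucc]; ring)], h, mul_zero]
    have hlast : (∑ i : Fin (m+1),
        (((Fin.last m:ℕ):ℝ) + 1 + (k:ℝ)) *
          (B (Fin.last m) i * aCoeff k (((i:ℕ):ℤ) - (((Fin.last m):ℕ):ℤ) - 1) t))
        = ((m:ℝ) + 1 + k) * W := by
      rw [← Finset.mul_sum, Fin.val_last, hWdef]
    simp only [hcs, Finset.sum_const_zero, zero_add, hlast]
  -- the summed recursion
  have hsum0 : (∑ i : Fin (m+1), ∑ j : Fin (m+1),
      (t * (B j i * aCoeff k (((i:ℕ):ℤ) - ((j:ℕ):ℤ) + 1) t)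
        + (((i:ℕ):ℝ) - ((j:ℕ):ℝ)) * (B j i * aCoeff k (((i:ℕ):ℤ) - ((j:ℕ):ℤ)) t)
        + t * (B j i * aCoeff k (((i:ℕ):ℤ) - ((j:ℕ):ℤ)) t)
        + (((i:ℕ):ℝ) * (aCoeff k (((i:ℕ):ℤ) - ((j:ℕ):ℤ) - 1) t * B j i)
            - (((j:ℕ):ℝ) + 1 + (k:ℝ)) * (B j i * aCoeff k (((i:ℕ):ℤ) - ((j:ℕ):ℤ) - 1) t)))) = 0 := by
    refine Finset.sum_eq_zero fun i _ => Finset.sum_eq_zero fun j _ => ?_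
    have h := aCoeff_rec k t (((i:ℕ):ℤ) - ((j:ℕ):ℤ))
    push_cast at h
    linear_combination B j i * h
  simp only [Finset.sum_add_distrib, Finset.sum_sub_distrib, ← Finset.mul_sum] at hsum0
  rw [hS1, hS2, hS3, hS4, hS5] at hsum0
  -- persymmetry: W equals Ũ⁺
  have hper : ∀ i : Fin (m+1), B (Fin.last m) i = B i.rev 0 := by
    intro i
    have h := congrFun (congrFun (inv_persymm k (m+1) t) i) (Fin.last m)
    rw [Matrix.transpose_apply] at h
    rw [mul_Jmat, Jmat_mul, Fin.rev_last] at h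
    exact h
  have hWU : W = ∑ j : Fin (m+1), B j 0 * aCoeff k (-(((j:ℕ):ℤ) + 1)) t := by
    rw [hWdef, ← Equiv.sum_comp Fin.revPerm
      (fun j : Fin (m+1) => B j 0 * aCoeff k (-(((j:ℕ):ℤ) + 1)) t)]
    refine Finset.sum_congr rfl fun i _ => ?_
    simp only [Fin.revPerm_apply]
    rw [hper i]
    congr 1
    apply aCoeff_congr
    have := i.isLt
    rw [Fin.val_rev]
    omega
  -- rewrite the goal
  have hgoal1 : ((Tn k (m+1) t)⁻¹ *ᵥ aplus k (m+1) t) ⟨0, by omega⟩ = U := by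
    rw [hUdef]
    simp only [Matrix.mulVec, dotProduct, aplus, ← hBdef]
    refine Finset.sum_congr rfl fun i _ => ?_
    congr 1
  have hgoal2 : (((Tn k (m+1) t)ᵀ)⁻¹ *ᵥ atplus k (m+1) t) ⟨0, by omega⟩
      = ∑ j : Fin (m+1), B j 0 * aCoeff k (-(((j:ℕ):ℤ) + 1)) t := by
    rw [← Matrix.transpose_nonsing_inv]
    simp only [Matrix.mulVec, dotProduct, Matrix.transpose_apply, atplus, ← hBdef]
    refine Finset.sum_congr rfl fun j _ => ?_
    have h00 : (⟨0, by omega⟩ : Fin (m+1)) = 0 := by ext; simp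
    rw [h00]
    try ring
  rw [hgoal1, hgoal2, ← hWU]
  push_cast
  linarith [hsum0]
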